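/- Let k ≥ 3, ℓ ≥ 1, n ≥ 1, and let M = (α_1 ⋯ α_k) be a 2^ℓ × k complex matrix of rank 2 whose columns α_σ, α_τ (σ ≠ τ) are linearly independent, and let X_{σ,τ} = (x^σ_w; x^τ_w)_{w ∈ Fin k} be the unique 2 × k matrix with (α_σ α_τ)·X_{σ,τ} = M. Suppose R is a non-degenerate tensor of arity n on domain size k with R = R̲ M^{⊗n} for some tensor R̲ of arity n on domain size 2^ℓ. Then for every w ∈ Fin k, the linear system A_{σ,τ}(R) · X = b_w(R) has the unique solution X = (x^σ_w, x^τ_w)ᵀ; that is, (x^σ_w, x^τ_w)ᵀ satisfies the system, and it is the only vector in ℂ² that does. -/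

import Mathlib

open Matrix BigOperators

/-- A tensor of arity `n` on domain size `k` is degenerate if it is a tensor
product of vectors. -/
def Degenerate {n k : ℕ} (R : (Fin n → Fin k) → ℂ) : Prop :=
  ∃ v : Fin n → (Fin k → ℂ), ∀ i, R i = ∏ t, v t (i t)

/-- The recognizer transform `R̲ M^{⊗n}` of a tensor `R̲` on domain `D`
under a matrix `M` with rows indexed by `D` and columns indexed by `E`. -/
noncomputable def rtrans {n : ℕ} {D E : Type*} [Fintype D] (M : Matrix D E ℂ)
    (R : (Fin n → D) → ℂ) : (Fin n → E) → ℂ :=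
  fun i => ∑ j : Fin n → D, R j * ∏ t, M (j t) (i t)

/-- The generator transform `M^{⊗n} G` of a column tensor `G` on domain `E`
under a matrix `M` with rows indexed by `D` and columns indexed by `E`. -/
noncomputable def gtrans {n : ℕ} {D E : Type*} [Fintype E] (M : Matrix D E ℂ)
    (G : (Fin n → E) → ℂ) : (Fin n → D) → ℂ :=
  fun s => ∑ i : Fin n → E, (∏ t, M (s t) (i t)) * G i

/-- The restriction `R^{(σ,τ)}` of a tensor on domain size `k` to `{σ, τ}`. -/
def restrict {n k : ℕ} (R : (Fin n → Fin k) → ℂ) (σ τ : Fin k) :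
    (Fin n → Fin 2) → ℂ :=
  fun j => R fun t => if j t = 0 then σ else τ

/-- The submatrix `(α_σ α_τ)` formed by the columns `σ` and `τ` of `M`. -/
def subM {D : Type*} {k : ℕ} (M : Matrix D (Fin k) ℂ) (σ τ : Fin k) :
    Matrix D (Fin 2) ℂ :=
  Matrix.of fun i c => if c = 0 then M i σ else M i τ

/-- The `t`-th signature matrix `A_R(t)` of a tensor on domain size 2. -/
def sigMatrix {n : ℕ} (R : (Fin n → Fin 2) → ℂ) (t : Fin n) :
    Matrix (Fin 2) ({s : Fin n // s ≠ t} → Fin 2) ℂ :=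
  Matrix.of fun b i => R fun s => if h : s = t then b else i ⟨s, h⟩

/-- The two-column matrix `A_{σ,τ}(R)`, with rows indexed by a position `t`
and an assignment of domain values to the remaining positions. -/
def Amat {n k : ℕ} (R : (Fin n → Fin k) → ℂ) (σ τ : Fin k) :
    Matrix (Σ t : Fin n, ({s : Fin n // s ≠ t} → Fin k)) (Fin 2) ℂ :=
  Matrix.of fun p c =>
    R fun s => if h : s = p.1 then (if c = 0 then σ else τ) else p.2 ⟨s, h⟩

/-- The column vector `b_w(R)`. -/
def bvec {n k : ℕ} (R : (Fin n → Fin k) → ℂ) (w : Fin k) :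
    (Σ t : Fin n, ({s : Fin n // s ≠ t} → Fin k)) → ℂ :=
  fun p => R fun s => if h : s = p.1 then w else p.2 ⟨s, h⟩

/-- The `2 × k` matrix `[[1,0,0,…,0],[0,1,0,…,0]]`. -/
def projMat (k : ℕ) : Matrix (Fin 2) (Fin k) ℂ :=
  Matrix.of fun r c => if (r : ℕ) = (c : ℕ) then 1 else 0

/-!
Since `M = (α_σ α_τ) X`, the transform factors through the restriction to `{σ, τ}`:
`R = R^{(σ,τ)} X^{⊗n}`. Column `w` of `X` writes `α_w` in terms of `α_σ` and `α_τ`, and `R`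
is linear in the column chosen at each position, so `(x^σ_w, x^τ_w)` solves the system.
The difference `(a, b)` of two solutions gives `a R(…σ…) + b R(…τ…) = 0` at every position;
then every one-position slice of `R^{(σ,τ)}` is proportional to `v = (b, -a)`, hence
`R^{(σ,τ)} = C v^{⊗n}` and `R = C (vX)^{⊗n}` is degenerate unless `(a, b) = 0`.
-/

open Function

section Transform

variable {n : ℕ} {D E F : Type*} [Fintype D] [Fintype F]

theorem rtrans_mul (N : Matrix D F ℂ) (X : Matrix F E ℂ) (R₀ : (Fin n → D) → ℂ) :
    rtrans (N * X) R₀ = rtrans X (rtrans N R₀) := by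
  funext i
  simp only [rtrans, Matrix.mul_apply, Finset.prod_univ_sum, Fintype.piFinset_univ,
    Finset.mul_sum, Finset.sum_mul]
  rw [Finset.sum_comm]
  refine Finset.sum_congr rfl fun c _ => Finset.sum_congr rfl fun j _ => ?_
  rw [Finset.prod_mul_distrib, mul_assoc]

theorem rtrans_update_of_col_eq (M : Matrix D E ℂ) (R₀ : (Fin n → D) → ℂ) (e : F → E)
    (c : F → ℂ) {w : E} (hw : ∀ a, M a w = ∑ z, c z * M a (e z)) (i : Fin n → E) (t : Fin n) :
    rtrans M R₀ (update i t w) = ∑ z, c z * rtrans M R₀ (update i t (e z)) := by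
  have hprod : ∀ (j : Fin n → D) (x : E),
      ∏ s, M (j s) (update i t x s) = M (j t) x * ∏ s ∈ Finset.univ.erase t, M (j s) (i s) := by
    intro j x
    rw [← Finset.mul_prod_erase Finset.univ _ (Finset.mem_univ t), update_self]
    congr 1
    exact Finset.prod_congr rfl fun s hs => by rw [update_of_ne (Finset.ne_of_mem_erase hs)]
  simp only [rtrans, hprod, hw, Finset.mul_sum, Finset.sum_mul]
  rw [Finset.sum_comm]
  refine Finset.sum_congr rfl fun j _ => Finset.sum_congr rfl fun z _ => ?_
  ring

end Transform

section Restriction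

variable {n k : ℕ} {D : Type*} [Fintype D]

theorem restrict_rtrans (M : Matrix D (Fin k) ℂ) (R₀ : (Fin n → D) → ℂ) (σ τ : Fin k) :
    restrict (rtrans M R₀) σ τ = rtrans (subM M σ τ) R₀ := by
  funext c
  simp only [restrict, rtrans, subM, Matrix.of_apply, apply_ite]

theorem restrict_update (R : (Fin n → Fin k) → ℂ) (σ τ : Fin k) (c : Fin n → Fin 2)
    (t : Fin n) (z : Fin 2) :
    restrict R σ τ (update c t z) =
      R (update (fun s => if c s = 0 then σ else τ) t (if z = 0 then σ else τ)) :=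
  congrArg R (comp_update (fun x : Fin 2 => if x = 0 then σ else τ) c t z)

variable {M : Matrix D (Fin k) ℂ} {σ τ : Fin k} {X : Matrix (Fin 2) (Fin k) ℂ}

theorem rtrans_restrict_of_mul_eq (hX : subM M σ τ * X = M) (R₀ : (Fin n → D) → ℂ) :
    rtrans X (restrict (rtrans M R₀) σ τ) = rtrans M R₀ := by
  rw [restrict_rtrans, ← rtrans_mul, hX]

theorem rtrans_update_of_subM_mul_eq (hX : subM M σ τ * X = M) (R₀ : (Fin n → D) → ℂ)
    (w : Fin k) (i : Fin n → Fin k) (t : Fin n) :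
    X 0 w * rtrans M R₀ (update i t σ) + X 1 w * rtrans M R₀ (update i t τ) =
      rtrans M R₀ (update i t w) := by
  have hcol : ∀ a, M a w = ∑ z, X z w * M a (if z = 0 then σ else τ) := fun a => by
    conv_lhs => rw [← hX]
    simp only [Matrix.mul_apply, subM, Matrix.of_apply, apply_ite, mul_comm]
  rw [rtrans_update_of_col_eq M R₀ _ _ hcol, Fin.sum_univ_two]
  simp

end Restriction

section Degenerate

variable {n k : ℕ}

theorem degenerate_const_mul_prod (t₀ : Fin n) (C : ℂ) (v : Fin n → Fin k → ℂ) :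
    Degenerate fun i => C * ∏ t, v t (i t) := by
  refine ⟨fun t z => (if t = t₀ then C else 1) * v t z, fun i => ?_⟩
  rw [Finset.prod_mul_distrib, Finset.prod_ite_eq', if_pos (Finset.mem_univ t₀)]

theorem degenerate_rtrans {m : ℕ} {S : (Fin n → Fin m) → ℂ} (hS : Degenerate S)
    (X : Matrix (Fin m) (Fin k) ℂ) : Degenerate (rtrans X S) := by
  obtain ⟨v, hv⟩ := hS
  refine ⟨fun t z => ∑ x, v t x * X x z, fun i => ?_⟩
  simp only [rtrans, hv, Finset.prod_univ_sum, Fintype.piFinset_univ, Finset.prod_mul_distrib]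

end Degenerate

section Exchange

variable {n : ℕ} {f : (Fin n → Fin 2) → ℂ} {v : Fin 2 → ℂ}

theorem mul_eq_update_mul_of_exchange
    (hrel : ∀ c t, v 1 * f (update c t 0) = v 0 * f (update c t 1))
    (c : Fin n → Fin 2) (t : Fin n) (x : Fin 2) :
    f c * v x = f (update c t x) * v (c t) := by
  rw [show f c = f (update c t (c t)) by rw [update_eq_self]]
  have h := hrel c t
  generalize c t = b
  revert b x
  simp only [Fin.forall_fin_two]
  exact ⟨⟨trivial, by linear_combination -h⟩, by linear_combination h, trivial⟩

theorem mul_prod_eq_of_exchange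
    (hrel : ∀ c t, v 1 * f (update c t 0) = v 0 * f (update c t 1))
    (s : Finset (Fin n)) {c d : Fin n → Fin 2} (hcd : ∀ t ∉ s, c t = d t) :
    f c * ∏ t ∈ s, v (d t) = f d * ∏ t ∈ s, v (c t) := by
  induction s using Finset.induction_on generalizing c with
  | empty => rw [funext fun t => hcd t (Finset.notMem_empty t)]
  | @insert t s ht ih =>
    have hagree : ∀ u ∉ s, update c t (d t) u = d u := by
      intro u hu
      by_cases hut : u = t
      · rw [hut, update_self]
      · rw [update_of_ne hut]
        exact hcd u (by simp [hut, hu])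
    have hoff : ∏ u ∈ s, v (update c t (d t) u) = ∏ u ∈ s, v (c u) :=
      Finset.prod_congr rfl fun u hu => by rw [update_of_ne (ne_of_mem_of_not_mem hu ht)]
    rw [Finset.prod_insert ht, Finset.prod_insert ht]
    linear_combination (∏ u ∈ s, v (d u)) * mul_eq_update_mul_of_exchange hrel c t (d t) +
      v (c t) * ih hagree + f d * v (c t) * hoff

theorem exists_eq_mul_prod_of_exchange
    (hrel : ∀ c t, v 1 * f (update c t 0) = v 0 * f (update c t 1)) (hv : v ≠ 0) :
    ∃ C : ℂ, ∀ c, f c = C * ∏ t, v (c t) := by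
  obtain ⟨b, hb⟩ : ∃ b, v b ≠ 0 := Function.ne_iff.1 hv
  refine ⟨f (fun _ => b) / v b ^ n, fun c => ?_⟩
  have h := mul_prod_eq_of_exchange hrel Finset.univ (c := c) (d := fun _ => b) (by simp)
  rw [Finset.prod_const, Finset.card_univ, Fintype.card_fin] at h
  field_simp
  linear_combination h

end Exchange

theorem mulVec_Amat_eq_bvec_iff {n k : ℕ} (R : (Fin n → Fin k) → ℂ) (σ τ w : Fin k)
    (y : Fin 2 → ℂ) :
    (Amat R σ τ).mulVec y = bvec R w ↔ ∀ (i : Fin n → Fin k) (t : Fin n),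
      y 0 * R (update i t σ) + y 1 * R (update i t τ) = R (update i t w) := by
  have hfill : ∀ (t : Fin n) (q : {s // s ≠ t} → Fin k) (i : Fin n → Fin k),
      (∀ s (h : s ≠ t), i s = q ⟨s, h⟩) → ∀ a,
        (fun s => if h : s = t then a else q ⟨s, h⟩) = update i t a := by
    intro t q i hi a
    funext s
    by_cases h : s = t
    · subst h; simp
    · simp [h, hi s h]
  have hrow : ∀ t q, (Amat R σ τ).mulVec y ⟨t, q⟩ =
      y 0 * R (fun s => if h : s = t then σ else q ⟨s, h⟩) +
        y 1 * R (fun s => if h : s = t then τ else q ⟨s, h⟩) := by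
    intro t q
    simp [Matrix.mulVec, dotProduct, Fin.sum_univ_two, Amat, mul_comm]
  constructor
  · intro hy i t
    have hfill' := hfill t (fun s => i s) i fun _ _ => rfl
    have h := congrFun hy ⟨t, fun s => i s⟩
    rwa [hrow, bvec, hfill' σ, hfill' τ, hfill' w] at h
  · intro h
    funext ⟨t, q⟩
    have hfill' := hfill t q (fun s => if h : s = t then σ else q ⟨s, h⟩) fun s h => dif_neg h
    rw [hrow]
    change _ = R fun s => if h : s = t then w else q ⟨s, h⟩
    rw [hfill' σ, hfill' τ, hfill' w]
    exact h _ t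

theorem degenerate_of_slice_relation {n k : ℕ} (hn : 0 < n) {D : Type*} [Fintype D]
    {M : Matrix D (Fin k) ℂ} {σ τ : Fin k} {X : Matrix (Fin 2) (Fin k) ℂ}
    (hX : subM M σ τ * X = M) (R₀ : (Fin n → D) → ℂ) {a b : ℂ} (hab : a ≠ 0 ∨ b ≠ 0)
    (hrel : ∀ i t, a * rtrans M R₀ (update i t σ) + b * rtrans M R₀ (update i t τ) = 0) :
    Degenerate (rtrans M R₀) := by
  have hv : ![b, -a] ≠ 0 := by
    intro h
    have h0 := congrFun h 0
    have h1 := congrFun h 1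
    simp only [Matrix.cons_val_zero, Matrix.cons_val_one, Pi.zero_apply, neg_eq_zero] at h0 h1
    tauto
  obtain ⟨C, hC⟩ := exists_eq_mul_prod_of_exchange (f := restrict (rtrans M R₀) σ τ)
    (fun c t => by
      rw [restrict_update, restrict_update]
      simp only [Matrix.cons_val_zero, Matrix.cons_val_one, if_pos, one_ne_zero, if_false]
      linear_combination -hrel _ t) hv
  have h := degenerate_rtrans (degenerate_const_mul_prod ⟨0, hn⟩ C fun _ => ![b, -a]) X
  rwa [← funext hC, rtrans_restrict_of_mul_eq hX] at h

theorem unique_solution_general {k ℓ n : ℕ} (hn : 1 ≤ n)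
    (M : Matrix (Fin (2 ^ ℓ)) (Fin k) ℂ) (σ τ : Fin k)
    (X : Matrix (Fin 2) (Fin k) ℂ) (hX : subM M σ τ * X = M)
    (R : (Fin n → Fin k) → ℂ) (R0 : (Fin n → Fin (2 ^ ℓ)) → ℂ)
    (hR : R = rtrans M R0) (hnd : ¬ Degenerate R) :
    ∀ w : Fin k,
      (Amat R σ τ).mulVec ![X 0 w, X 1 w] = bvec R w ∧
      ∀ y : Fin 2 → ℂ, (Amat R σ τ).mulVec y = bvec R w → y = ![X 0 w, X 1 w] := by
  intro w
  subst hR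
  have hlin := rtrans_update_of_subM_mul_eq hX R0 w
  have hsol := (mulVec_Amat_eq_bvec_iff _ σ τ w ![X 0 w, X 1 w]).2 (by simpa using hlin)
  refine ⟨hsol, fun y hy => ?_⟩
  by_contra hne
  refine hnd (degenerate_of_slice_relation hn hX R0 (a := y 0 - X 0 w) (b := y 1 - X 1 w)
    ?_ fun i t => ?_)
  · contrapose! hne
    ext z
    fin_cases z <;> simp [sub_eq_zero.1 hne.1, sub_eq_zero.1 hne.2]
  · linear_combination (mulVec_Amat_eq_bvec_iff _ σ τ w y).1 hy i t - hlin i t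

/-- If `R` is non-degenerate and `R = R̲ M^{⊗n}`, then for
every `w` the linear system `A_{σ,τ}(R) · X = b_w(R)` has the unique solution
`(x^σ_w, x^τ_w)ᵀ`. -/
theorem unique_solution {k ℓ n : ℕ} (hk : 3 ≤ k) (hℓ : 1 ≤ ℓ) (hn : 1 ≤ n)
    (M : Matrix (Fin (2 ^ ℓ)) (Fin k) ℂ) (hM : M.rank = 2) (σ τ : Fin k)
    (hστ : σ ≠ τ)
    (hind : LinearIndependent ℂ ![(fun i => M i σ), (fun i => M i τ)])
    (X : Matrix (Fin 2) (Fin k) ℂ) (hX : subM M σ τ * X = M)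
    (R : (Fin n → Fin k) → ℂ) (R0 : (Fin n → Fin (2 ^ ℓ)) → ℂ)
    (hR : R = rtrans M R0) (hnd : ¬ Degenerate R) :
    ∀ w : Fin k,
      (Amat R σ τ).mulVec ![X 0 w, X 1 w] = bvec R w ∧
      ∀ y : Fin 2 → ℂ, (Amat R σ τ).mulVec y = bvec R w → y = ![X 0 w, X 1 w] :=
  unique_solution_general hn M σ τ X hX R R0 hR hnd
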